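/- Let $H = -\Delta + V$ with heat semigroup kernel satisfying $|\nabla_x^\alpha e^{-tH}(x,y)| \le c_n t^{-(n+\alpha)/2}e^{-c|x-y|^2/t}$ for $\alpha = 0, 1$ and all $t > 0$. Suppose additionally that for $t = 2^{-j}$ the weighted bound $\int \langle 2^{j/2}(z-y)\rangle^N |(e^{tH}\Phi(2^{-j}H))(z,y)|\,dz \le M$ holds uniformly in $y$. Then $|\nabla_x^\alpha \Phi(2^{-j}H)(x,y)| \le C_N\, M\, 2^{j(n+\alpha)/2}(1 + 2^{j/2}|x-y|)^{-N}$, using the factorization $\nabla_x^\alpha \Phi_j(H)(x,y) = \int \nabla_x^\alpha e^{-tH}(x,z)\,(e^{tH}\Phi_j(H))(z,y)\,dz$ and the peetre-type inequality $\langle (x-y)/\sqrt t\rangle \le \langle (x-z)/\sqrt t\rangle \langle (z-y)/\sqrt t\rangle$. -/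

import Mathlib

/-!
Factor the Gaussian of `K₁` against the weight: by the Peetre-type inequality
`⟨(x-y)/√t⟩ ≤ ⟨(x-z)/√t⟩ ⟨(z-y)/√t⟩`, the weight `⟨(x-y)/√t⟩^N` can be moved from `(x,y)`
to `(z,y)` at the cost of `e^{-c|u|²} ⟨u⟩^N` with `u = (x-z)/√t`, which is bounded by
`e^{N²/(4c)}`. The remaining integral is the weighted column bound `M` of `K₂`.
-/

open MeasureTheory

/-- The constant comes from `(1 + u)^N ≤ e^{N u}` and maximizing `-c u² + N u`. -/
lemma Real.exp_neg_mul_sq_mul_one_add_pow_le (N : ℕ) {c u : ℝ} (hc : 0 < c) (hu : 0 ≤ u) :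
    Real.exp (-c * u ^ 2) * (1 + u) ^ N ≤ Real.exp ((N : ℝ) ^ 2 / (4 * c)) := by
  have h_pow : (1 + u) ^ N ≤ Real.exp ((N : ℝ) * u) := by
    calc (1 + u) ^ N ≤ Real.exp u ^ N :=
          pow_le_pow_left₀ (by linarith) (by linarith [Real.add_one_le_exp u]) N
      _ = Real.exp ((N : ℝ) * u) := (Real.exp_nat_mul u N).symm
  calc Real.exp (-c * u ^ 2) * (1 + u) ^ N
      ≤ Real.exp (-c * u ^ 2) * Real.exp ((N : ℝ) * u) := by gcongr
    _ = Real.exp (-c * u ^ 2 + (N : ℝ) * u) := (Real.exp_add _ _).symm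
    _ ≤ Real.exp ((N : ℝ) ^ 2 / (4 * c)) := by
        rw [Real.exp_le_exp, le_div_iff₀ (by positivity)]
        nlinarith [sq_nonneg (2 * c * u - N)]

lemma one_add_norm_sub_div_le_mul {E : Type*} [SeminormedAddCommGroup E] (x y z : E) {s : ℝ}
    (hs : 0 ≤ s) :
    1 + ‖x - y‖ / s ≤ (1 + ‖x - z‖ / s) * (1 + ‖z - y‖ / s) := by
  have h_tri : ‖x - y‖ / s ≤ ‖x - z‖ / s + ‖z - y‖ / s := by
    rw [← add_div]
    exact div_le_div_of_nonneg_right (norm_sub_le_norm_sub_add_norm_sub x z y) hs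
  have := mul_nonneg (div_nonneg (norm_nonneg (x - z)) hs) (div_nonneg (norm_nonneg (z - y)) hs)
  nlinarith

lemma exp_neg_mul_norm_sq_div_mul_weight_le {E : Type*} [SeminormedAddCommGroup E] (N : ℕ)
    {c t : ℝ} (hc : 0 < c) (ht : 0 < t) (x y z : E) :
    Real.exp (-c * ‖x - z‖ ^ 2 / t) * (1 + ‖x - y‖ / Real.sqrt t) ^ N ≤
      Real.exp ((N : ℝ) ^ 2 / (4 * c)) * (1 + ‖z - y‖ / Real.sqrt t) ^ N := by
  set u := ‖x - z‖ / Real.sqrt t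
  have h_exponent : -c * ‖x - z‖ ^ 2 / t = -c * u ^ 2 := by
    rw [div_pow, Real.sq_sqrt ht.le]; ring
  have h_peetre := one_add_norm_sub_div_le_mul x y z (Real.sqrt_nonneg t)
  calc Real.exp (-c * ‖x - z‖ ^ 2 / t) * (1 + ‖x - y‖ / Real.sqrt t) ^ N
      ≤ Real.exp (-c * u ^ 2) * ((1 + u) * (1 + ‖z - y‖ / Real.sqrt t)) ^ N := by
        rw [h_exponent]; gcongr
    _ = (Real.exp (-c * u ^ 2) * (1 + u) ^ N) * (1 + ‖z - y‖ / Real.sqrt t) ^ N := by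
        rw [mul_pow, mul_assoc]
    _ ≤ Real.exp ((N : ℝ) ^ 2 / (4 * c)) * (1 + ‖z - y‖ / Real.sqrt t) ^ N := by
        gcongr
        exact Real.exp_neg_mul_sq_mul_one_add_pow_le N hc (by positivity)

lemma norm_integral_mul_le_mul_integral_weight {X 𝕜 : Type*} [MeasurableSpace X] {μ : Measure X}
    [NormedRing 𝕜] [NormedSpace ℝ 𝕜] {f g : X → 𝕜} {w : X → ℝ} {B : ℝ}
    (hf : ∀ z, ‖f z‖ ≤ B * w z) (hint : Integrable (fun z => w z * ‖g z‖) μ) :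
    ‖∫ z, f z * g z ∂μ‖ ≤ B * ∫ z, w z * ‖g z‖ ∂μ := by
  rw [← integral_const_mul]
  refine norm_integral_le_of_norm_le (hint.const_mul B) (Filter.Eventually.of_forall fun z => ?_)
  calc ‖f z * g z‖ ≤ ‖f z‖ * ‖g z‖ := norm_mul_le _ _
    _ ≤ B * (w z * ‖g z‖) := by rw [← mul_assoc]; gcongr; exact hf z

/-- Key step in the proof of Theorem 1.1: if `K₁(x,z) = ∇ₓ^α e^{-tH}(x,z)` satisfies a
Gaussian bound `|K₁(x,z)| ≤ c_n t^{-(n+α)/2} e^{-c|x-z|²/t}`, and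
`K₂ = e^{tH}Φ(2^{-j}H)` satisfies the weighted column bound
`∫ ⟨(z-y)/√t⟩^N |K₂(z,y)| dz ≤ M`, then the factorization
`G(x,y) = ∇ₓ^α Φ_j(H)(x,y) = ∫ K₁(x,z) K₂(z,y) dz` yields
`|G(x,y)| ≤ C M t^{-(n+α)/2} ⟨(x-y)/√t⟩^{-N}` (with `t = 2^{-j}` this is
`C M 2^{j(n+α)/2}(1+2^{j/2}|x-y|)^{-N}`). -/
theorem stmt_16 (n α N : ℕ) (cn c : ℝ) (hcn : 0 < cn) (hc : 0 < c) :
    ∃ C > 0, ∀ t M : ℝ, 0 < t → 0 ≤ M →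
      ∀ K₁ K₂ G : EuclideanSpace ℝ (Fin n) → EuclideanSpace ℝ (Fin n) → ℂ,
        (∀ x z, ‖K₁ x z‖ ≤
          cn * t ^ (-((n:ℝ) + (α:ℝ))/2) * Real.exp (-c * ‖x - z‖^2 / t)) →
        (∀ y, ∫ z, (1 + ‖z - y‖ / Real.sqrt t) ^ N * ‖K₂ z y‖ ∂volume ≤ M) →
        (∀ y, Integrable (fun z => (1 + ‖z - y‖ / Real.sqrt t) ^ N * ‖K₂ z y‖) volume) →
        (∀ x y, G x y = ∫ z, K₁ x z * K₂ z y ∂volume) →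
        ∀ x y, ‖G x y‖ ≤
          C * M * t ^ (-((n:ℝ) + (α:ℝ))/2) / (1 + ‖x - y‖ / Real.sqrt t) ^ N := by
  set E := Real.exp ((N : ℝ) ^ 2 / (4 * c))
  refine ⟨cn * E, by positivity, fun t M ht hM K₁ K₂ G hK₁ hK₂ hK₂_int hG x y => ?_⟩
  set tp := t ^ (-((n:ℝ) + (α:ℝ))/2)
  set weight_xy := (1 + ‖x - y‖ / Real.sqrt t) ^ N
  have h_weight_pos : 0 < weight_xy := by positivity
  set B := cn * E * tp / weight_xy
  have h_pointwise (z) : ‖K₁ x z‖ ≤ B * (1 + ‖z - y‖ / Real.sqrt t) ^ N := by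
    have h_gauss := exp_neg_mul_norm_sq_div_mul_weight_le N hc ht x y z
    calc ‖K₁ x z‖ ≤ cn * tp * Real.exp (-c * ‖x - z‖ ^ 2 / t) := hK₁ x z
      _ ≤ cn * tp * (E * (1 + ‖z - y‖ / Real.sqrt t) ^ N / weight_xy) := by
          gcongr; rwa [le_div_iff₀ h_weight_pos]
      _ = B * (1 + ‖z - y‖ / Real.sqrt t) ^ N := by ring
  calc ‖G x y‖ ≤ B * ∫ z, (1 + ‖z - y‖ / Real.sqrt t) ^ N * ‖K₂ z y‖ :=
        hG x y ▸ norm_integral_mul_le_mul_integral_weight h_pointwise (hK₂_int y)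
    _ ≤ B * M := by gcongr; exact hK₂ y
    _ = cn * E * M * tp / weight_xy := by ring
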